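/- arXiv:1810.07453 — 4 statements merged into one kernel-verified Lean document; each statement's English description precedes it below -/
import Mathlib

section
/- Let (X,T) be a minimal topological dynamical system with X compact. If f ∈ C(X,ℤ) (an integer-valued continuous function) is the coboundary of some real-valued continuous function g ∈ C(X,ℝ), then f is also the coboundary of some integer-valued continuous function h ∈ C(X,ℤ). -/
open Filter Topology MeasureTheory

namespace Balance

variable {A : Type*}

/-- number of (possibly overlapping) occurrences of `v` as a factor of `w` -/
def occ [DecidableEq A] (v w : List A) : ℕ :=
  ((List.range (w.length + 1)).filter (fun i => v <+: w.drop i)).length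

/-- the factor of the bi-infinite word `u` starting at position `i`, of length `n` -/
def factorAt (u : ℤ → A) (i : ℤ) (n : ℕ) : List A :=
  (List.range n).map (fun k => u (i + k))

/-- `w` is a factor of the bi-infinite word `u` -/
def IsFactor (u : ℤ → A) (w : List A) : Prop :=
  ∃ i : ℤ, w = factorAt u i w.length

/-- the bi-infinite word `u` is balanced on the word `v` -/
def BalancedOn [DecidableEq A] (u : ℤ → A) (v : List A) : Prop :=
  ∃ C : ℕ, ∀ w w' : List A, IsFactor u w → IsFactor u w' → w.length = w'.length →
    ((occ v w : ℤ) - (occ v w' : ℤ)).natAbs ≤ C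

/-- the shift map on bi-infinite words -/
def shift (x : ℤ → A) : ℤ → A := fun n => x (n + 1)

/-- cylinder of points spelling `v` at coordinates `0,…,|v|-1` -/
def Cyl (v : List A) : Set (ℤ → A) := {x | factorAt x 0 v.length = v}

/-- the language of a set of bi-infinite words -/
def Lang (X : Set (ℤ → A)) : Set (List A) := {w | ∃ x ∈ X, IsFactor x w}

/-- a subshift is balanced on the word `v` -/
def SubshiftBalancedOn [DecidableEq A] (X : Set (ℤ → A)) (v : List A) : Prop :=
  ∃ C : ℕ, ∀ w w' : List A, w ∈ Lang X → w' ∈ Lang X → w.length = w'.length →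
    ((occ v w : ℤ) - (occ v w' : ℤ)).natAbs ≤ C

/-- a subshift: a nonempty closed shift-invariant set of bi-infinite words -/
structure IsSubshift [TopologicalSpace A] (X : Set (ℤ → A)) : Prop where
  nonempty : X.Nonempty
  closed : IsClosed X
  inv : shift '' X = X

/-- a minimal subshift -/
def IsMinimalSubshift [TopologicalSpace A] (X : Set (ℤ → A)) : Prop :=
  IsSubshift X ∧
    ∀ Y : Set (ℤ → A), Y ⊆ X → IsClosed Y → shift '' Y = Y → Y.Nonempty → Y = X

/-- a substitution applied to a finite word -/
def substW (σ : A → List A) (w : List A) : List A := w.flatMap σ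

/-- iterates `σ^n` applied to a finite word -/
def substIter (σ : A → List A) (n : ℕ) (w : List A) : List A := (substW σ)^[n] w

/-- a primitive (non-erasing) substitution -/
def IsPrimitive (σ : A → List A) : Prop :=
  (∀ a, σ a ≠ []) ∧ ∃ n : ℕ, ∀ a b : A, a ∈ substIter σ n [b]

/-- the subshift generated by the substitution `σ` -/
def Xsub (σ : A → List A) : Set (ℤ → A) :=
  {x | ∀ w : List A, IsFactor x w → ∃ (a : A) (n : ℕ), w <:+: substIter σ n [a]}

/-- a substitution applied to a bi-infinite word (the image of position 0 starts at 0) -/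
def substPoint [Inhabited A] (σ : A → List A) (x : ℤ → A) : ℤ → A := fun n =>
  if 0 ≤ n then
    (substW σ ((List.range (n.toNat + 1)).map (fun i => x (i : ℤ)))).getD n.toNat default
  else
    (((List.range ((-n - 1).toNat + 1)).map (fun i => x (-(i : ℤ) - 1))).flatMap
      (fun a => (σ a).reverse)).getD (-n - 1).toNat default

end Balance

/-!
Reduced modulo `ℤ`, the transfer function `g` becomes a continuous `T`-invariant map to the
circle `ℝ/ℤ`; by minimality it is constant. Hence `g - g x₀` takes integer values, and, `ℤ`
being discrete in `ℝ`, it is a continuous integer-valued function with the same coboundary.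
-/

theorem apply_eq_apply_of_invariant_of_minimal {X Y : Type*} [TopologicalSpace X]
    [TopologicalSpace Y] [T1Space Y] (T : X → X) (hT : Function.Surjective T)
    (hmin : ∀ S : Set X, IsClosed S → T '' S = S → S.Nonempty → S = Set.univ)
    {φ : X → Y} (hφ : Continuous φ) (hφT : ∀ x, φ (T x) = φ x) (x y : X) : φ y = φ x := by
  have hclosed : IsClosed (φ ⁻¹' {φ x}) := isClosed_singleton.preimage hφ
  have hinv : T '' (φ ⁻¹' {φ x}) = φ ⁻¹' {φ x} := by
    ext z
    constructor
    · rintro ⟨w, hw, rfl⟩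
      simpa [hφT] using hw
    · intro hz
      obtain ⟨w, rfl⟩ := hT z
      exact ⟨w, by simpa [hφT] using hz, rfl⟩
  have hall := hmin _ hclosed hinv ⟨x, rfl⟩
  exact (Set.eq_univ_iff_forall.mp hall y : _)

theorem ContinuousMap.exists_intCast_eq {X : Type*} [TopologicalSpace X] (g : C(X, ℝ))
    (hg : ∀ x, ∃ n : ℤ, g x = n) : ∃ h : C(X, ℤ), ∀ x, (h x : ℝ) = g x := by
  choose h hh using hg
  have hcast : Int.cast ∘ h = g := funext fun x => (hh x).symm
  exact ⟨⟨h, Int.isClosedEmbedding_coe_real.isEmbedding.continuous_iff.mpr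
    (hcast ▸ g.continuous)⟩, fun x => (hh x).symm⟩

namespace Balance

theorem integer_coboundary_general {X : Type*} [TopologicalSpace X] (T : X ≃ₜ X)
    (hmin : ∀ Y : Set X, IsClosed Y → (fun x => T x) '' Y = Y → Y.Nonempty → Y = Set.univ)
    (f : C(X, ℤ))
    (hg : ∃ g : C(X, ℝ), ∀ x : X, (f x : ℝ) = g (T x) - g x) :
    ∃ h : C(X, ℤ), ∀ x : X, f x = h (T x) - h x := by
  obtain ⟨g, hfg⟩ := hg
  rcases isEmpty_or_nonempty X with _ | ⟨⟨x₀⟩⟩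
  · exact ⟨0, isEmptyElim⟩
  have hgT : ∀ x, ((g (T x) : ℝ) : UnitAddCircle) = g x := fun x => by
    rw [← eq_sub_iff_add_eq'.mp (hfg x), AddCircle.coe_add,
      (AddCircle.coe_eq_zero_iff (x := (f x : ℝ)) 1).mpr ⟨f x, zsmul_one _⟩, add_zero]
  have hmod : ∀ x, ((g x : ℝ) : UnitAddCircle) = g x₀ :=
    apply_eq_apply_of_invariant_of_minimal _ T.surjective hmin
      ((AddCircle.continuous_mk' 1).comp g.continuous) hgT x₀
  have hint : ∀ x, ∃ n : ℤ, (g - ContinuousMap.const X (g x₀)) x = n := fun x => by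
    obtain ⟨n, hn⟩ := (AddCircle.coe_eq_zero_iff 1).mp
      (by rw [AddCircle.coe_sub, hmod, sub_self] : ((g x - g x₀ : ℝ) : UnitAddCircle) = 0)
    exact ⟨n, by simpa using hn.symm⟩
  obtain ⟨h, hh⟩ := (g - ContinuousMap.const X (g x₀)).exists_intCast_eq hint
  refine ⟨h, fun x => Int.cast_injective (α := ℝ) ?_⟩
  simp only [Int.cast_sub, hh, hfg, ContinuousMap.sub_apply, ContinuousMap.const_apply]
  ring

/-- If an integer-valued continuous function on a compact minimal system is a real
continuous coboundary, then it is an integer continuous coboundary. -/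
theorem integer_coboundary {X : Type*} [TopologicalSpace X] [CompactSpace X] (T : X ≃ₜ X)
    (hmin : ∀ Y : Set X, IsClosed Y → (fun x => T x) '' Y = Y → Y.Nonempty → Y = Set.univ)
    (f : C(X, ℤ))
    (hg : ∃ g : C(X, ℝ), ∀ x : X, (f x : ℝ) = g (T x) - g x) :
    ∃ h : C(X, ℤ), ∀ x : X, f x = h (T x) - h x :=
  integer_coboundary_general T hmin f hg

end Balance
end

section
/- Let T be a finite tree whose vertex set is bipartitioned into X and Y with Card(X), Card(Y) ≥ 2, all edges joining X to Y, and edge set E. Let G be an abelian group, H a subgroup of G, and g : X ∪ Y ∪ E → G a function such that (1) g maps every vertex into H, and (2) for every x ∈ X, g(x) = Σ_{y: (x,y)∈E} g(x,y), and for every y ∈ Y, g(y) = Σ_{x: (x,y)∈E} g(x,y). Then g(x,y) ∈ H for every edge (x,y) ∈ E. -/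
open Filter Topology MeasureTheory

/-!
Deleting the edge `xy` of the tree disconnects `x` from `y`. Sum the balance conditions over
the `X`-vertices of the component of `x` and subtract those over its `Y`-vertices: every edge
inside the component occurs once with each sign, no other edge leaves the component, so
`g(x,y)` is a difference of two sums of vertex values, all of which lie in `H`.
-/

open Finset

theorem Finset.sum_sub_sum_eq_sum_cut {α β G : Type*} [AddCommGroup G] (X : Finset α)
    (Y : Finset β) (r : α → β → Prop) [∀ a, DecidablePred (r a)] (p : α → Prop)
    [DecidablePred p] (q : β → Prop) [DecidablePred q] (f : α → β → G) :
    ∑ a ∈ X with p a, ∑ b ∈ Y with r a b, f a b - ∑ b ∈ Y with q b, ∑ a ∈ X with r a b, f a b =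
      ∑ ab ∈ X ×ˢ Y with r ab.1 ab.2 ∧ p ab.1 ∧ ¬ q ab.2, f ab.1 ab.2 -
        ∑ ab ∈ X ×ˢ Y with r ab.1 ab.2 ∧ ¬ p ab.1 ∧ q ab.2, f ab.1 ab.2 := by
  simp only [sum_filter, ite_sum_zero, sum_product]
  rw [sum_comm (s := Y)]
  simp only [← sum_sub_distrib]
  refine sum_congr rfl fun a _ => sum_congr rfl fun b _ => ?_
  split_ifs <;> simp_all

namespace SimpleGraph

variable {V : Type*} {G : SimpleGraph V}

theorem reachable_deleteEdges_iff_of_adj {e : Sym2 V} {u a b : V} (hab : G.Adj a b)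
    (he : s(a, b) ≠ e) :
    (G.deleteEdges {e}).Reachable u a ↔ (G.deleteEdges {e}).Reachable u b := by
  have hab' : (G.deleteEdges {e}).Adj a b := (deleteEdges_adj ..).2 ⟨hab, he⟩
  exact ⟨fun h => h.trans hab'.reachable, fun h => h.trans hab'.symm.reachable⟩

theorem edge_eq_sum_sub_sum_of_cut [DecidableRel G.Adj] {A : Type*} [AddCommGroup A]
    {X Y : Finset V} (hdisj : Disjoint X Y) {x y : V} (hx : x ∈ X) (hy : y ∈ Y)
    (hxy : G.Adj x y) {p : V → Prop} [DecidablePred p] (hpx : p x) (hpy : ¬ p y)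
    (hcut : ∀ a b, G.Adj a b → s(a, b) ≠ s(x, y) → (p a ↔ p b)) (f : V → V → A) :
    f x y = ∑ a ∈ X with p a, ∑ b ∈ Y with G.Adj a b, f a b -
      ∑ b ∈ Y with p b, ∑ a ∈ X with G.Adj a b, f a b := by
  have hcross : ∀ a ∈ X, ∀ b ∈ Y, G.Adj a b → (p a ↔ p b) ∨ (a, b) = (x, y) := by
    intro a ha b hb hab
    by_cases he : s(a, b) = s(x, y)
    · rcases Sym2.eq_iff.mp he with ⟨rfl, rfl⟩ | ⟨rfl, -⟩
      · exact .inr rfl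
      · exact absurd hy (Finset.disjoint_left.mp hdisj ha)
    · exact .inl (hcut a b hab he)
  have hout : {ab ∈ X ×ˢ Y | G.Adj ab.1 ab.2 ∧ p ab.1 ∧ ¬ p ab.2} = {(x, y)} := by
    ext ⟨a, b⟩
    simp only [mem_filter, mem_product, mem_singleton]
    constructor
    · rintro ⟨⟨ha, hb⟩, hab, hpa, hpb⟩
      exact (hcross a ha b hb hab).resolve_left fun h => hpb (h.1 hpa)
    · rintro ⟨⟩
      exact ⟨⟨hx, hy⟩, hxy, hpx, hpy⟩
  have hin : {ab ∈ X ×ˢ Y | G.Adj ab.1 ab.2 ∧ ¬ p ab.1 ∧ p ab.2} = ∅ := by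
    refine filter_eq_empty_iff.mpr fun ⟨a, b⟩ hmem ⟨hab, hpa, hpb⟩ => ?_
    obtain ⟨ha, hb⟩ := mem_product.mp hmem
    rcases hcross a ha b hb hab with h | h
    · exact hpa (h.2 hpb)
    · exact hpa ((Prod.ext_iff.mp h).1 ▸ hpx)
  rw [sum_sub_sum_eq_sum_cut, hout, hin, sum_singleton, sum_empty, sub_zero]

end SimpleGraph

namespace Balance

open SimpleGraph

theorem bipartite_tree_lemma_general {V : Type*}
    (Gr : SimpleGraph V) [DecidableRel Gr.Adj] (htree : Gr.IsTree)
    (X Y : Finset V) (hdisj : Disjoint X Y)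
    {G : Type*} [AddCommGroup G] (H : AddSubgroup G)
    (gv : V → G) (ge : V → V → G)
    (h1 : ∀ v : V, gv v ∈ H)
    (h2x : ∀ x ∈ X, gv x = ∑ y ∈ Y.filter (fun y => Gr.Adj x y), ge x y)
    (h2y : ∀ y ∈ Y, gv y = ∑ x ∈ X.filter (fun x => Gr.Adj x y), ge x y) :
    ∀ x ∈ X, ∀ y ∈ Y, Gr.Adj x y → ge x y ∈ H := by
  intro x hx y hy hxy
  classical
  have hbridge : ¬ (Gr.deleteEdges {s(x, y)}).Reachable x y :=
    isAcyclic_iff_forall_adj_isBridge.mp htree.isAcyclic hxy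
  rw [edge_eq_sum_sub_sum_of_cut hdisj hx hy hxy (Reachable.refl x) hbridge
    (fun _ _ hab he => reachable_deleteEdges_iff_of_adj hab he) ge]
  refine sub_mem (sum_mem fun a ha => ?_) (sum_mem fun b hb => ?_)
  · rw [← h2x a (mem_filter.mp ha).1]
    exact h1 a
  · rw [← h2y b (mem_filter.mp hb).1]
    exact h1 b

/-- The bipartite tree lemma: if vertex values lie in a subgroup `H` and each vertex value
is the sum of the values of its incident edges, then every edge value lies in `H`. -/
theorem bipartite_tree_lemma {V : Type*} [Fintype V] [DecidableEq V]
    (Gr : SimpleGraph V) [DecidableRel Gr.Adj] (htree : Gr.IsTree)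
    (X Y : Finset V) (hpart : ∀ v : V, v ∈ X ∨ v ∈ Y) (hdisj : Disjoint X Y)
    (hbip : ∀ u v : V, Gr.Adj u v → (u ∈ X ∧ v ∈ Y) ∨ (u ∈ Y ∧ v ∈ X))
    (hX : 2 ≤ X.card) (hY : 2 ≤ Y.card)
    {G : Type*} [AddCommGroup G] (H : AddSubgroup G)
    (gv : V → G) (ge : V → V → G)
    (h1 : ∀ v : V, gv v ∈ H)
    (h2x : ∀ x ∈ X, gv x = ∑ y ∈ Y.filter (fun y => Gr.Adj x y), ge x y)
    (h2y : ∀ y ∈ Y, gv y = ∑ x ∈ X.filter (fun x => Gr.Adj x y), ge x y) :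
    ∀ x ∈ X, ∀ y ∈ Y, Gr.Adj x y → ge x y ∈ H :=
  bipartite_tree_lemma_general Gr htree X Y hdisj H gv ge h1 h2x h2y

end Balance
end

section
/- Let (X,T) be a minimal dendric subshift. Then (X,T) is balanced on letters if and only if it is balanced on all factors. -/
open Filter Topology MeasureTheory

namespace Balance

/-- the extension graph of the word `w` in the language of `X`: a bipartite graph on two
copies of the alphabet, with an edge between left copy `a` and right copy `b` iff `awb`
is in the language -/
def extGraph {A : Type*} (X : Set (ℤ → A)) (w : List A) : SimpleGraph (A ⊕ A) where
  Adj u v :=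
    (∃ a b, u = Sum.inl a ∧ v = Sum.inr b ∧ a :: (w ++ [b]) ∈ Lang X) ∨
    (∃ a b, v = Sum.inl a ∧ u = Sum.inr b ∧ a :: (w ++ [b]) ∈ Lang X)
  symm := by
    constructor
    rintro u v (⟨a, b, h1, h2, h3⟩ | ⟨a, b, h1, h2, h3⟩)
    · exact Or.inr ⟨a, b, h1, h2, h3⟩
    · exact Or.inl ⟨a, b, h1, h2, h3⟩
  loopless := by
    constructor
    rintro u (⟨a, b, h1, h2, _⟩ | ⟨a, b, h1, h2, _⟩) <;> rw [h1] at h2 <;> cases h2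

/-- the vertices of the extension graph: left extensions and right extensions of `w` -/
def extVerts {A : Type*} (X : Set (ℤ → A)) (w : List A) : Set (A ⊕ A) :=
  {v | (∃ a, v = Sum.inl a ∧ a :: w ∈ Lang X) ∨ (∃ b, v = Sum.inr b ∧ w ++ [b] ∈ Lang X)}

/-- a minimal dendric subshift: the extension graph of every word of the language is a tree -/
def IsDendric {A : Type*} [TopologicalSpace A] (X : Set (ℤ → A)) : Prop :=
  IsMinimalSubshift X ∧
    ∀ w ∈ Lang X, (SimpleGraph.induce (extVerts X w) (extGraph X w)).IsTree

/-!
If the extension graph of `u` is acyclic, the edge `(a, b)` given by a word `a u b` is a bridge,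
so it cuts the graph into two sides; let `SL` and `SR` be the left and right extensions on the side
of `a`. Every other occurrence of a word `a' u b'` contributes an edge with both ends on one side,
so counting these occurrences once by rows (`a' u`) and once by columns (`u b'`) gives
`|w|_{aub} = ∑_{a' ∈ SL} |w|_{a'u} - ∑_{b' ∈ SR} |w|_{ub'}` up to boundary terms at the two
ends of `w`, which are bounded by the size of the alphabet. Balanced functions on the language
form an additive group that is stable under bounded perturbations, so by induction on `|v|` the
occurrence count of every word is balanced once those of the letters are.
-/

theorem _root_.SimpleGraph.IsAcyclic.exists_separating_set {V : Type*} {G : SimpleGraph V}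
    (hG : G.IsAcyclic) {x y : V} (hxy : G.Adj x y) :
    ∃ S : Set V, x ∈ S ∧ y ∉ S ∧
      ∀ ⦃x' y'⦄, G.Adj x' y' → s(x', y') ≠ s(x, y) → (x' ∈ S ↔ y' ∈ S) := by
  set H := G.deleteEdges {s(x, y)}
  have hbridge : ¬ H.Reachable x y :=
    SimpleGraph.isBridge_iff.mp (SimpleGraph.isAcyclic_iff_forall_adj_isBridge.mp hG hxy)
  refine ⟨{z | H.Reachable z x}, SimpleGraph.Reachable.refl x, fun h => hbridge h.symm, ?_⟩
  intro x' y' h hne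
  have hH : H.Adj x' y' := SimpleGraph.deleteEdges_adj.mpr ⟨h, hne⟩
  exact ⟨hH.symm.reachable.trans, hH.reachable.trans⟩

theorem _root_.Finset.sum_sum_sub_sum_sum_eq {α β M : Type*} [Fintype α] [Fintype β]
    [AddCommGroup M] (f : α → β → M) {S : Finset α} {T : Finset β} {a : α} {b : β}
    (ha : a ∈ S) (hb : b ∉ T)
    (hf : ∀ a' b', f a' b' ≠ 0 → (a', b') ≠ (a, b) → (a' ∈ S ↔ b' ∈ T)) :
    ∑ a' ∈ S, ∑ b', f a' b' - ∑ b' ∈ T, ∑ a', f a' b' = f a b := by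
  classical
  have hsingle : ∀ a' b', (if a' ∈ S then f a' b' else 0) - (if b' ∈ T then f a' b' else 0) =
      if (a', b') = (a, b) then f a b else 0 := by
    intro a' b'
    by_cases hab : (a', b') = (a, b)
    · obtain ⟨rfl, rfl⟩ := Prod.ext_iff.mp hab
      simp [ha, hb]
    by_cases h0 : f a' b' = 0
    · simp [hab, h0]
    have hST := hf a' b' h0 hab
    by_cases hS : a' ∈ S
    · simp [hab, hS, hST.mp hS]
    · simp [hab, hS, mt hST.mpr hS]
  calc ∑ a' ∈ S, ∑ b', f a' b' - ∑ b' ∈ T, ∑ a', f a' b'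
      = ∑ a', ∑ b', ((if a' ∈ S then f a' b' else 0) - if b' ∈ T then f a' b' else 0) := by
        rw [Finset.sum_comm (s := T)]
        simp [Finset.sum_sub_distrib]
    _ = f a b := by
        simp only [hsingle]
        rw [← Fintype.sum_prod_type']
        simp

section Occurrences

variable {A : Type*} [DecidableEq A]

lemma occ_nil (v : List A) : occ v [] = if v = [] then 1 else 0 := by
  by_cases h : v = [] <;> simp [occ, h]

lemma occ_cons (v : List A) (x : A) (w : List A) :
    occ v (x :: w) = (if v <+: x :: w then 1 else 0) + occ v w := by
  simp only [occ, List.length_cons, List.range_succ_eq_map, List.filter_cons, List.drop_zero,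
    List.filter_map]
  by_cases h : v <+: x :: w <;> simp [h, Function.comp_def, add_comm]

lemma infix_of_occ_ne_zero {v w : List A} (h : occ v w ≠ 0) : v <:+: w := by
  obtain ⟨i, hi⟩ := List.exists_mem_of_length_pos (Nat.pos_of_ne_zero h)
  have hi : v <+: w.drop i := by simpa using List.of_mem_filter hi
  exact hi.isInfix.trans (List.drop_suffix i w).isInfix

variable [Fintype A]

lemma ite_prefix_eq_sum_ite_concat_prefix (v l : List A) :
    (if v <+: l then 1 else 0 : ℕ) =
      (∑ b, if v ++ [b] <+: l then 1 else 0) + if v = l then 1 else 0 := by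
  induction v generalizing l with
  | nil => cases l <;> simp
  | cons c v ih =>
    cases l with
    | nil => simp
    | cons y l => by_cases h : c = y <;> simp [h, ih]

theorem occ_eq_sum_occ_cons (v w : List A) :
    occ v w = (∑ a, occ (a :: v) w) + if v <+: w then 1 else 0 := by
  induction w with
  | nil => simp [occ_nil, List.prefix_nil]
  | cons x w ih =>
    have hx : (∑ a, if a :: v <+: x :: w then 1 else 0) = if v <+: w then 1 else 0 := by
      simp only [List.cons_prefix_cons, ite_and, Finset.sum_ite_eq', Finset.mem_univ, if_true]
    rw [occ_cons, ih]
    simp only [occ_cons, Finset.sum_add_distrib, hx]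
    omega

theorem occ_eq_sum_occ_concat (v w : List A) :
    occ v w = (∑ b, occ (v ++ [b]) w) + if v <:+ w then 1 else 0 := by
  induction w with
  | nil => simp [occ_nil, List.suffix_nil]
  | cons x w ih =>
    have hsuffix : (if v <:+ x :: w then 1 else 0) =
        (if v = x :: w then 1 else 0) + if v <:+ w then 1 else 0 := by
      by_cases h : v = x :: w
      · have : ¬ x :: w <:+ w := fun h => by simpa using h.length_le
        simp [h, this]
      · simp [List.suffix_cons_iff, h]
    rw [occ_cons, ih, ite_prefix_eq_sum_ite_concat_prefix, hsuffix]
    simp only [occ_cons, Finset.sum_add_distrib]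
    omega

end Occurrences

section Language

variable {A : Type*}

lemma factorAt_eq_map (u : ℤ → A) (i : ℤ) (n : ℕ) :
    factorAt u i n = (List.range n).map fun k : ℕ => u (i + k) := by
  simp [factorAt, ← List.map_eq_flatMap]

@[simp]
lemma length_factorAt (u : ℤ → A) (i : ℤ) (n : ℕ) : (factorAt u i n).length = n := by
  simp [factorAt_eq_map]

@[simp]
lemma getElem_factorAt (u : ℤ → A) (i : ℤ) (n k : ℕ) (hk : k < (factorAt u i n).length) :
    (factorAt u i n)[k] = u (i + k) := by
  simp [factorAt_eq_map]

lemma IsFactor.of_infix {u : ℤ → A} {v w : List A} (hvw : v <:+: w) (hw : IsFactor u w) :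
    IsFactor u v := by
  obtain ⟨s, t, rfl⟩ := hvw
  obtain ⟨i, hi⟩ := hw
  refine ⟨i + s.length, List.ext_getElem (by simp) fun k hk _ => ?_⟩
  have hsk : s.length + k < (s ++ v ++ t).length := by simp only [List.length_append]; omega
  calc v[k] = (s ++ v ++ t)[s.length + k] := by
        simp [List.append_assoc, List.getElem_append_left hk]
    _ = (factorAt u i (s ++ v ++ t).length)[s.length + k]'(by simpa using hsk) := by
        simp only [← hi]
    _ = (factorAt u (i + s.length) v.length)[k] := by simp [add_assoc]

lemma mem_lang_of_infix {X : Set (ℤ → A)} {v w : List A} (hvw : v <:+: w) (hw : w ∈ Lang X) :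
    v ∈ Lang X :=
  let ⟨x, hx, hf⟩ := hw
  ⟨x, hx, hf.of_infix hvw⟩

variable [DecidableEq A] {X : Set (ℤ → A)} {v w : List A}

lemma mem_lang_of_occ_ne_zero (h : occ v w ≠ 0) (hw : w ∈ Lang X) : v ∈ Lang X :=
  mem_lang_of_infix (infix_of_occ_ne_zero h) hw

lemma occ_eq_zero_of_not_mem_lang (hv : v ∉ Lang X) (hw : w ∈ Lang X) : occ v w = 0 :=
  not_imp_comm.mp (mem_lang_of_occ_ne_zero · hw) hv

end Language

section BalancedFunctions

variable {A : Type*} (X : Set (ℤ → A))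

def balancedFunctions : AddSubgroup (List A → ℤ) where
  carrier :=
    {g | ∃ C : ℤ, ∀ w ∈ Lang X, ∀ w' ∈ Lang X, w.length = w'.length → |g w - g w'| ≤ C}
  zero_mem' := ⟨0, by simp⟩
  add_mem' := by
    rintro g h ⟨C, hC⟩ ⟨D, hD⟩
    refine ⟨C + D, fun w hw w' hw' hl => ?_⟩
    calc |(g + h) w - (g + h) w'| = |(g w - g w') + (h w - h w')| := by
          simp only [Pi.add_apply]; ring_nf
      _ ≤ C + D := (abs_add_le _ _).trans (add_le_add (hC w hw w' hw' hl) (hD w hw w' hw' hl))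
  neg_mem' := by
    rintro g ⟨C, hC⟩
    refine ⟨C, fun w hw w' hw' hl => ?_⟩
    rw [Pi.neg_apply, Pi.neg_apply, neg_sub_neg, abs_sub_comm]
    exact hC w hw w' hw' hl

variable {X}

lemma mem_balancedFunctions {g : List A → ℤ} : g ∈ balancedFunctions X ↔
    ∃ C : ℤ, ∀ w ∈ Lang X, ∀ w' ∈ Lang X, w.length = w'.length → |g w - g w'| ≤ C :=
  Iff.rfl

lemma mem_balancedFunctions_of_abs_sub_le {g h : List A → ℤ} (hh : h ∈ balancedFunctions X)
    (K : ℤ) (hgh : ∀ w ∈ Lang X, |g w - h w| ≤ K) : g ∈ balancedFunctions X := by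
  obtain ⟨C, hC⟩ := hh
  refine ⟨C + 2 * K, fun w hw w' hw' hl => ?_⟩
  calc |g w - g w'| = |(g w - h w) + (h w - h w') - (g w' - h w')| := by ring_nf
    _ ≤ |g w - h w| + |h w - h w'| + |g w' - h w'| :=
        (abs_sub _ _).trans (add_le_add_left (abs_add_le _ _) _)
    _ ≤ C + 2 * K := by linarith [hgh w hw, hgh w' hw', hC w hw w' hw' hl]

lemma comp_length_mem_balancedFunctions (φ : ℕ → ℤ) :
    (fun w : List A => φ w.length) ∈ balancedFunctions X :=
  ⟨0, fun w _ w' _ hl => by simp [hl]⟩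

variable [DecidableEq A]

lemma subshiftBalancedOn_iff (v : List A) :
    SubshiftBalancedOn X v ↔ (fun w => (occ v w : ℤ)) ∈ balancedFunctions X := by
  rw [mem_balancedFunctions]
  constructor
  · rintro ⟨C, hC⟩
    refine ⟨C, fun w hw w' hw' hl => ?_⟩
    rw [← Int.natCast_natAbs]
    exact_mod_cast hC w w' hw hw' hl
  · rintro ⟨C, hC⟩
    refine ⟨C.toNat, fun w w' hw hw' hl => ?_⟩
    have := hC w hw w' hw' hl
    rw [← Int.natCast_natAbs] at this
    omega

lemma occ_mem_balancedFunctions_of_not_mem_lang {v : List A} (hv : v ∉ Lang X) :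
    (fun w => (occ v w : ℤ)) ∈ balancedFunctions X :=
  mem_balancedFunctions_of_abs_sub_le (comp_length_mem_balancedFunctions fun _ => 0) 0
    fun w hw => by simp [occ_eq_zero_of_not_mem_lang hv hw]

end BalancedFunctions

section Extensions

variable {A : Type*}

lemma exists_extGraph_cut [Fintype A] {X : Set (ℤ → A)} {u : List A} {a b : A}
    (hT : (SimpleGraph.induce (extVerts X u) (extGraph X u)).IsAcyclic)
    (hv : a :: u ++ [b] ∈ Lang X) :
    ∃ SL SR : Finset A, a ∈ SL ∧ b ∉ SR ∧
      ∀ a' b', a' :: u ++ [b'] ∈ Lang X → (a', b') ≠ (a, b) → (a' ∈ SL ↔ b' ∈ SR) := by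
  classical
  have hedge : ∀ {a' b'}, a' :: u ++ [b'] ∈ Lang X →
      ∃ (hl : Sum.inl a' ∈ extVerts X u) (hr : Sum.inr b' ∈ extVerts X u),
        (SimpleGraph.induce (extVerts X u) (extGraph X u)).Adj ⟨_, hl⟩ ⟨_, hr⟩ :=
    fun {a' b'} h => ⟨Or.inl ⟨a', rfl, mem_lang_of_infix ⟨[], [b'], by simp⟩ h⟩,
      Or.inr ⟨b', rfl, mem_lang_of_infix ⟨[a'], [], by simp⟩ h⟩,
      Or.inl ⟨a', b', rfl, rfl, by simpa using h⟩⟩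
  obtain ⟨hl, hr, hab⟩ := hedge hv
  obtain ⟨S, haS, hbS, hS⟩ := hT.exists_separating_set hab
  refine ⟨({a' | ∃ h, ⟨Sum.inl a', h⟩ ∈ S} : Finset A),
    ({b' | ∃ h, ⟨Sum.inr b', h⟩ ∈ S} : Finset A),
    by simpa using ⟨hl, haS⟩, by simpa using fun _ => hbS, fun a' b' h hne => ?_⟩
  obtain ⟨hl', hr', hab'⟩ := hedge h
  have := hS hab' (by simpa [Sym2.eq_iff] using hne)
  simpa [hl', hr'] using this

variable [DecidableEq A] [Fintype A]

lemma abs_occ_sub_sum_occ_le {u : List A} {a b : A} {SL SR : Finset A} (ha : a ∈ SL)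
    (hb : b ∉ SR) {w : List A}
    (hcut : ∀ a' b', occ (a' :: u ++ [b']) w ≠ 0 → (a', b') ≠ (a, b) → (a' ∈ SL ↔ b' ∈ SR)) :
    |(occ (a :: u ++ [b]) w : ℤ) -
        (∑ a' ∈ SL, (occ (a' :: u) w : ℤ) - ∑ b' ∈ SR, (occ (u ++ [b']) w : ℤ))| ≤
      Fintype.card A := by
  set f : A → A → ℤ := fun a' b' => occ (a' :: u ++ [b']) w
  have hrows : ∑ a' ∈ SL, (occ (a' :: u) w : ℤ) =
      ∑ a' ∈ SL, ∑ b', f a' b' + ∑ a' ∈ SL, if a' :: u <:+ w then 1 else 0 := by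
    rw [← Finset.sum_add_distrib]
    refine Finset.sum_congr rfl fun a' _ => ?_
    rw [occ_eq_sum_occ_concat]
    push_cast
    rfl
  have hcols : ∑ b' ∈ SR, (occ (u ++ [b']) w : ℤ) =
      ∑ b' ∈ SR, ∑ a', f a' b' + ∑ b' ∈ SR, if u ++ [b'] <+: w then 1 else 0 := by
    rw [← Finset.sum_add_distrib]
    refine Finset.sum_congr rfl fun b' _ => ?_
    rw [occ_eq_sum_occ_cons]
    push_cast
    rfl
  have hcancel : ∑ a' ∈ SL, ∑ b', f a' b' - ∑ b' ∈ SR, ∑ a', f a' b' =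
      (occ (a :: u ++ [b]) w : ℤ) :=
    Finset.sum_sum_sub_sum_sum_eq f ha hb fun a' b' h => hcut a' b' (by simpa [f] using h)
  have hboundary : ∀ (S : Finset A) (p : A → Prop) [DecidablePred p],
      0 ≤ (∑ x ∈ S, if p x then 1 else 0 : ℤ) ∧
        (∑ x ∈ S, if p x then 1 else 0 : ℤ) ≤ Fintype.card A := by
    intro S p _
    rw [Finset.sum_boole]
    exact ⟨by positivity,
      by exact_mod_cast (Finset.card_filter_le _ _).trans (Finset.card_le_univ _)⟩
  have hL := hboundary SL (fun a' => a' :: u <:+ w)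
  have hR := hboundary SR (fun b' => u ++ [b'] <+: w)
  rw [hrows, hcols, abs_le]
  constructor <;> linarith

end Extensions

section AcyclicExtensionGraphs

variable {A : Type*} [DecidableEq A] [Fintype A] {X : Set (ℤ → A)}

lemma occ_cons_append_mem_balancedFunctions
    (hacyc : ∀ u ∈ Lang X, (SimpleGraph.induce (extVerts X u) (extGraph X u)).IsAcyclic)
    {u : List A} (hu : ∀ v : List A, v.length = u.length + 1 →
      (fun w => (occ v w : ℤ)) ∈ balancedFunctions X) (a b : A) :
    (fun w => (occ (a :: u ++ [b]) w : ℤ)) ∈ balancedFunctions X := by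
  by_cases hv : a :: u ++ [b] ∈ Lang X
  swap
  · exact occ_mem_balancedFunctions_of_not_mem_lang hv
  obtain ⟨SL, SR, ha, hb, hcut⟩ :=
    exists_extGraph_cut (hacyc u (mem_lang_of_infix ⟨[a], [b], rfl⟩ hv)) hv
  have hsum : (∑ a' ∈ SL, fun w => (occ (a' :: u) w : ℤ)) -
      (∑ b' ∈ SR, fun w => (occ (u ++ [b']) w : ℤ)) ∈ balancedFunctions X :=
    sub_mem (sum_mem fun a' _ => hu _ rfl) (sum_mem fun b' _ => hu _ (by simp))
  refine mem_balancedFunctions_of_abs_sub_le hsum (Fintype.card A) fun w hw => ?_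
  simpa using abs_occ_sub_sum_occ_le ha hb fun a' b' h =>
    hcut a' b' (mem_lang_of_occ_ne_zero h hw)

theorem occ_mem_balancedFunctions
    (hacyc : ∀ u ∈ Lang X, (SimpleGraph.induce (extVerts X u) (extGraph X u)).IsAcyclic)
    (hletters : ∀ a : A, (fun w => (occ [a] w : ℤ)) ∈ balancedFunctions X) (v : List A) :
    (fun w => (occ v w : ℤ)) ∈ balancedFunctions X := by
  induction hn : v.length using Nat.strong_induction_on generalizing v with
  | _ n ih =>
  obtain rfl | ⟨L, b, rfl⟩ := v.eq_nil_or_concat'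
  · simpa [occ] using comp_length_mem_balancedFunctions (X := X) fun n => (n + 1 : ℤ)
  cases L with
  | nil => exact hletters b
  | cons a u =>
    refine occ_cons_append_mem_balancedFunctions hacyc (fun v hv => ?_) a b
    exact ih v.length (by simp [← hn, hv]) v rfl

end AcyclicExtensionGraphs

theorem dendric_balanced_letters_iff_factors_general {A : Type*} [Fintype A] [DecidableEq A]
    [TopologicalSpace A]
    (X : Set (ℤ → A)) (hX : IsDendric X) :
    (∀ a : A, SubshiftBalancedOn X [a]) ↔ (∀ v ∈ Lang X, SubshiftBalancedOn X v) := by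
  simp only [subshiftBalancedOn_iff]
  refine ⟨fun h v _ => occ_mem_balancedFunctions (fun u hu => (hX.2 u hu).isAcyclic) h v,
    fun h a => ?_⟩
  by_cases ha : [a] ∈ Lang X
  · exact h [a] ha
  · exact occ_mem_balancedFunctions_of_not_mem_lang ha

/-- A minimal dendric subshift is balanced on letters iff it is balanced on all factors. -/
theorem dendric_balanced_letters_iff_factors {A : Type*} [Fintype A] [DecidableEq A]
    [TopologicalSpace A] [DiscreteTopology A]
    (X : Set (ℤ → A)) (hX : IsDendric X) :
    (∀ a : A, SubshiftBalancedOn X [a]) ↔ (∀ v ∈ Lang X, SubshiftBalancedOn X v) :=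
  dendric_balanced_letters_iff_factors_general X hX

end Balance
end

section
/- The Thue–Morse subshift, generated by the substitution 0 ↦ 01, 1 ↦ 10, is not balanced on any factor of length ℓ ≥ 2: for every word v of length ℓ ≥ 2 in the Thue–Morse language, there is no constant C bounding the differences of occurrence counts of v in equally long factors. -/
open Filter Topology MeasureTheory

namespace Balance

/-- the Thue–Morse substitution `0 ↦ 01`, `1 ↦ 10` on the alphabet `Bool` -/
def sigmaTM : Bool → List Bool := fun b => if b then [true, false] else [false, true]

/-! ## Auxiliary development -/

section Aux

def tm : ℕ → Bool
  | 0 => false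
  | n+1 => xor (((n+1) % 2) == 1) (tm ((n+1)/2))
decreasing_by exact Nat.div_lt_self (Nat.succ_pos n) one_lt_two

lemma tm_zero : tm 0 = false := by rw [tm]

lemma tm_succ (n : ℕ) : tm (n+1) = xor (((n+1) % 2) == 1) (tm ((n+1)/2)) := by rw [tm]

lemma tm_even (n : ℕ) : tm (2*n) = tm n := by
  rcases n with _ | m
  · rfl
  · rw [show 2*(m+1) = (2*m+1)+1 by ring, tm_succ]
    have h1 : (2*m+1+1) % 2 = 0 := by omega
    have h2 : (2*m+1+1)/2 = m+1 := by omega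
    simp [h1, h2]

lemma tm_odd (n : ℕ) : tm (2*n+1) = !tm n := by
  rw [tm_succ]
  have h1 : (2*n+1) % 2 = 1 := by omega
  have h2 : (2*n+1)/2 = n := by omega
  simp [h1, h2]

lemma tm_one : tm 1 = true := by
  have := tm_odd 0; simpa [tm_zero] using this

lemma tm_three : tm 3 = false := by
  have := tm_odd 1; simp [tm_one] at this; simpa using this

lemma tm_mul_pow_add (a : ℕ) : ∀ p m, m < 2^p → tm (a * 2^p + m) = xor (tm a) (tm m) := by
  intro p
  induction p with
  | zero =>
    intro m h
    interval_cases m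
    simp [tm_zero]
  | succ p ih =>
    intro m h
    have hpow : 2^(p+1) = 2*2^p := by ring
    have hdiv : m / 2 < 2^p := by omega
    rcases Nat.even_or_odd m with ⟨m', hm⟩ | ⟨m', hm⟩
    · have h1 : a * 2^(p+1) + m = 2*(a*2^p + m') := by
        rw [hpow]; ring_nf; omega
      have h2 : m' < 2^p := by omega
      rw [h1, tm_even, ih m' h2, hm, show m' + m' = 2*m' by ring, tm_even]
    · have h1 : a * 2^(p+1) + m = 2*(a*2^p + m') + 1 := by
        rw [hpow]; ring_nf; omega
      have h2 : m' < 2^p := by omega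
      rw [h1, tm_odd, ih m' h2, hm, tm_odd]
      cases tm a <;> cases tm m' <;> rfl

lemma tm_pow_add {p m : ℕ} (h : m < 2^p) : tm (2^p + m) = !tm m := by
  have := tm_mul_pow_add 1 p m h
  simpa [tm_one] using this

lemma tm_three_pow_add {p m : ℕ} (h : m < 2^p) : tm (3*2^p + m) = tm m := by
  have := tm_mul_pow_add 3 p m h
  simpa [tm_three] using this

lemma tm_no_triple (q : ℕ) (b : Bool) : ¬ (tm q = b ∧ tm (q+1) = b ∧ tm (q+2) = b) := by
  rintro ⟨h1, h2, h3⟩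
  rcases Nat.even_or_odd q with ⟨i, hi⟩ | ⟨i, hi⟩
  · rw [hi, show i + i = 2*i by ring] at h1 h2
    rw [tm_even] at h1
    rw [tm_odd] at h2
    rw [h1] at h2
    cases b <;> simp at h2
  · rw [hi] at h2 h3
    rw [show 2*i+1+1 = 2*(i+1) by ring] at h2
    rw [show 2*i+1+2 = 2*(i+1)+1 by ring] at h3
    rw [tm_even] at h2
    rw [tm_odd] at h3
    rw [h2] at h3
    cases b <;> simp at h3


/-- the match predicate: the word `v` occurs in the Thue-Morse sequence at position `p` -/
def Mt (v : List Bool) (p : ℕ) : Prop := ∀ r, (_ : r < v.length) → v.getD r false = tm (p + r)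

instance (v : List Bool) (p : ℕ) : Decidable (Mt v p) := Nat.decidableBallLT _ _

def Occ (v : List Bool) : Prop := ∃ p, Mt v p

/-- number of occurrences of `v` in Thue-Morse starting at positions in `[a, a+n)` -/
def cnt (v : List Bool) (a n : ℕ) : ℕ := (List.range' a n).countP (fun p => decide (Mt v p))

lemma cnt_zero (v a) : cnt v a 0 = 0 := rfl

lemma cnt_succ (v a n) : cnt v a (n+1) = cnt v a n + (if Mt v (a+n) then 1 else 0) := by
  have h : List.range' a (n+1) = List.range' a n ++ [a+n] := by
    have := List.range'_append (s := a) (m := n) (n := 1) (step := 1)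
    simp at this
    rw [← this]
  rw [cnt, h, List.countP_append, cnt]
  by_cases hM : Mt v (a+n) <;> simp [List.countP, List.countP.go, hM]

lemma cnt_add (v a m n) : cnt v a (m+n) = cnt v a m + cnt v (a+m) n := by
  have h := List.range'_append (s := a) (m := m) (n := n) (step := 1)
  simp only [one_mul] at h
  rw [cnt, ← h, List.countP_append, cnt, cnt]

lemma cnt_eq_zero (v a n) (h : ¬ Occ v) : cnt v a n = 0 := by
  rw [cnt, List.countP_eq_zero]
  intro p _
  simp only [decide_eq_true_eq]
  exact fun hM => h ⟨p, hM⟩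

/-- desubstitution: the word covering even-position occurrences -/
def evenChild (v : List Bool) : List Bool :=
  (List.range ((v.length + 1)/2)).map (fun r => v.getD (2*r) false)

/-- desubstitution: the word covering odd-position occurrences -/
def oddChild (v : List Bool) : List Bool :=
  (!v.getD 0 false) :: (List.range (v.length/2)).map (fun r => v.getD (2*r+1) false)

def consE (v : List Bool) : Prop :=
  ∀ r, (_ : r < v.length) → 2*r+1 < v.length → v.getD (2*r+1) false = !v.getD (2*r) false

def consO (v : List Bool) : Prop :=
  ∀ r, (_ : r < v.length) → 2*r+2 < v.length → v.getD (2*r+2) false = !v.getD (2*r+1) false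

instance (v : List Bool) : Decidable (consE v) := Nat.decidableBallLT _ _
instance (v : List Bool) : Decidable (consO v) := Nat.decidableBallLT _ _

lemma getD_map_range (f : ℕ → Bool) {n r : ℕ} (h : r < n) :
    ((List.range n).map f).getD r false = f r := by
  rw [List.getD_eq_getElem?_getD, List.getElem?_map, List.getElem?_range h]
  rfl

lemma evenChild_length (v) : (evenChild v).length = (v.length + 1)/2 := by
  simp [evenChild]

lemma oddChild_length (v) : (oddChild v).length = v.length/2 + 1 := by
  simp [oddChild]

lemma evenChild_getD (v) {r} (h : r < (v.length+1)/2) :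
    (evenChild v).getD r false = v.getD (2*r) false := getD_map_range _ h

lemma oddChild_getD_zero (v) : (oddChild v).getD 0 false = !v.getD 0 false := rfl

lemma oddChild_getD_succ (v) {r} (h : r < v.length/2) :
    (oddChild v).getD (r+1) false = v.getD (2*r+1) false := by
  rw [oddChild, List.getD_cons_succ]
  exact getD_map_range _ h

lemma Mt_even (v : List Bool) (i : ℕ) :
    Mt v (2*i) ↔ consE v ∧ Mt (evenChild v) i := by
  constructor
  · intro h
    refine ⟨?_, ?_⟩
    · intro r hr h2
      have e1 := h (2*r+1) h2
      have e2 := h (2*r) (by omega)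
      rw [e1, e2, show 2*i + (2*r+1) = 2*(i+r)+1 by ring, show 2*i + 2*r = 2*(i+r) by ring,
        tm_odd, tm_even]
    · intro r hr
      rw [evenChild_length] at hr
      rw [evenChild_getD v hr]
      have h2r : 2*r < v.length := by omega
      rw [h (2*r) h2r, show 2*i + 2*r = 2*(i+r) by ring, tm_even]
  · rintro ⟨hE, hc⟩ r hr
    rcases Nat.even_or_odd r with ⟨s, hs⟩ | ⟨s, hs⟩
    · have hs' : r = 2*s := by omega
      have hb : s < (v.length+1)/2 := by omega
      have := hc s (by rw [evenChild_length]; exact hb)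
      rw [evenChild_getD v hb] at this
      rw [hs', this, show 2*i + 2*s = 2*(i+s) by ring, tm_even]
    · have hb : s < (v.length+1)/2 := by omega
      have h2s : 2*s < v.length := by omega
      have e1 := hE s (by omega) (by omega)
      have := hc s (by rw [evenChild_length]; exact hb)
      rw [evenChild_getD v hb] at this
      rw [hs, e1, this, show 2*i + (2*s+1) = 2*(i+s)+1 by ring, tm_odd]

lemma Mt_odd (v : List Bool) (i : ℕ) (hl : 1 ≤ v.length) :
    Mt v (2*i+1) ↔ consO v ∧ Mt (oddChild v) i := by
  constructor
  · intro h
    refine ⟨?_, ?_⟩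
    · intro r hr h2
      have e1 := h (2*r+2) h2
      have e2 := h (2*r+1) (by omega)
      rw [e1, e2, show 2*i+1 + (2*r+2) = 2*(i+r+1)+1 by ring,
        show 2*i+1 + (2*r+1) = 2*(i+r+1) by ring, tm_odd, tm_even]
    · intro r hr
      rw [oddChild_length] at hr
      rcases r with _ | s
      · rw [oddChild_getD_zero, h 0 (by omega)]
        simp only [Nat.add_zero]
        rw [tm_odd]
        simp
      · have hb : s < v.length/2 := by omega
        rw [oddChild_getD_succ v hb, h (2*s+1) (by omega),
          show 2*i+1 + (2*s+1) = 2*(i+(s+1)) by ring, tm_even]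
  · rintro ⟨hO, hc⟩ r hr
    have h0 : (oddChild v).getD 0 false = tm i := by
      have := hc 0 (by rw [oddChild_length]; omega)
      simpa using this
    rcases r with _ | r'
    · rw [oddChild_getD_zero] at h0
      simp only [Nat.add_zero]
      rw [tm_odd]
      rw [← h0]
      simp
    · rcases Nat.even_or_odd r' with ⟨s, hs⟩ | ⟨s, hs⟩
      · -- r = r'+1 = 2s+1
        have hr' : r' + 1 = 2*s+1 := by omega
        have hb : s < v.length/2 := by omega
        have := hc (s+1) (by rw [oddChild_length]; omega)
        rw [oddChild_getD_succ v hb] at this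
        rw [hr', this, show 2*i+1 + (2*s+1) = 2*(i+(s+1)) by ring, tm_even]
      · -- r = r'+1 = 2s+2
        have hr' : r' + 1 = 2*s+2 := by omega
        have hb : s < v.length/2 := by omega
        have e1 := hO s (by omega) (by omega)
        have := hc (s+1) (by rw [oddChild_length]; omega)
        rw [oddChild_getD_succ v hb] at this
        rw [hr', e1, this, show 2*i+1 + (2*s+2) = 2*(i+(s+1))+1 by ring, tm_odd]

lemma cnt_double (v : List Bool) (hl : 1 ≤ v.length) (K : ℕ) :
    cnt v 0 (2*K) = (if consE v then cnt (evenChild v) 0 K else 0)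
                  + (if consO v then cnt (oddChild v) 0 K else 0) := by
  induction K with
  | zero => simp [cnt_zero]
  | succ K ih =>
    have h1 : 2*(K+1) = (2*K + 1) + 1 := by ring
    rw [h1, cnt_succ, show 2*K+1 = 2*K+1 from rfl, cnt_succ, ih]
    simp only [Nat.zero_add]
    by_cases hE : consE v <;> by_cases hO : consO v <;>
      simp only [hE, hO, if_true, if_false, cnt_succ, Nat.zero_add, Mt_even, Mt_odd v _ hl] <;>
      by_cases hME : Mt (evenChild v) K <;> by_cases hMO : Mt (oddChild v) K <;>
      simp [hME, hMO, hE, hO] <;> omega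

/-- complement of a word -/
def cmp (v : List Bool) : List Bool := v.map not

@[simp] lemma cmp_length (v) : (cmp v).length = v.length := by simp [cmp]

lemma cmp_getD (v) {r} (h : r < v.length) : (cmp v).getD r false = !v.getD r false := by
  rw [List.getD_eq_getElem?_getD, List.getD_eq_getElem?_getD, cmp, List.getElem?_map]
  rw [(List.getElem?_eq_getElem h : v[r]? = some v[r])]
  rfl

@[simp] lemma cmp_cmp (v) : cmp (cmp v) = v := by
  rw [cmp, cmp, List.map_map, show (not ∘ not) = id by funext b; simp]
  exact List.map_id v

lemma Mt_cmp (v : List Bool) (p k : ℕ) (h : p + v.length ≤ 2^k) :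
    Mt (cmp v) p ↔ Mt v (2^k + p) := by
  constructor
  · intro hm r hr
    have := hm r (by simpa using hr)
    rw [cmp_getD v hr] at this
    rw [show 2^k + p + r = 2^k + (p+r) by ring, tm_pow_add (by omega), ← this]
    simp
  · intro hm r hr
    rw [cmp_length] at hr
    rw [cmp_getD v hr]
    have := hm r hr
    rw [show 2^k + p + r = 2^k + (p+r) by ring, tm_pow_add (by omega)] at this
    rw [this]
    simp

lemma Occ_cmp (v : List Bool) (h : Occ v) : Occ (cmp v) := by
  obtain ⟨p, hp⟩ := h
  refine ⟨2^(p + v.length) + p, ?_⟩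
  have hle : p + v.length ≤ 2^(p + v.length) := le_of_lt (Nat.lt_pow_self one_lt_two)
  have := (Mt_cmp (cmp v) p (p + v.length) (by simpa using hle))
  rw [cmp_cmp] at this
  exact this.mp hp

lemma Occ_cmp_iff (v : List Bool) : Occ (cmp v) ↔ Occ v :=
  ⟨fun h => by simpa using Occ_cmp _ h, Occ_cmp v⟩

lemma evenChild_cmp (v) : evenChild (cmp v) = cmp (evenChild v) := by
  rw [evenChild, evenChild, cmp_length,
    show cmp (List.map (fun r => v.getD (2*r) false) (List.range ((v.length+1)/2)))
      = List.map (not ∘ (fun r => v.getD (2*r) false)) (List.range ((v.length+1)/2)) by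
      rw [cmp, List.map_map]]
  apply List.map_congr_left
  intro r hr
  rw [List.mem_range] at hr
  simp only [Function.comp]
  exact cmp_getD v (by omega)

lemma oddChild_cmp (v) (hl : 1 ≤ v.length) : oddChild (cmp v) = cmp (oddChild v) := by
  rw [oddChild, oddChild, cmp_length]
  rw [show cmp ((!v.getD 0 false) :: (List.range (v.length/2)).map (fun r => v.getD (2*r+1) false))
    = (!(!v.getD 0 false)) :: ((List.range (v.length/2)).map (fun r => v.getD (2*r+1) false)).map not
    from rfl]
  rw [List.map_map]
  congr 1
  · rw [cmp_getD v (by omega)]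
  · apply List.map_congr_left
    intro r hr
    rw [List.mem_range] at hr
    simp only [Function.comp]
    exact cmp_getD v (by omega)

lemma consE_cmp (v) : consE (cmp v) ↔ consE v := by
  constructor
  · intro h r hr h2
    have := h r (by simpa using hr) (by simpa using h2)
    rw [cmp_getD v (by omega), cmp_getD v (by omega)] at this
    exact Bool.not_inj this
  · intro h r hr h2
    rw [cmp_length] at hr h2
    rw [cmp_getD v (by omega), cmp_getD v (by omega), h r hr h2]
lemma consO_cmp (v) : consO (cmp v) ↔ consO v := by
  constructor
  · intro h r hr h2
    have := h r (by simpa using hr) (by simpa using h2)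
    rw [cmp_getD v (by omega), cmp_getD v (by omega)] at this
    exact Bool.not_inj this
  · intro h r hr h2
    rw [cmp_length] at hr h2
    rw [cmp_getD v (by omega), cmp_getD v (by omega), h r hr h2]


/-! ### length-2 counting -/

lemma Mt_pair (a b : Bool) (p : ℕ) : Mt [a, b] p ↔ (a = tm p ∧ b = tm (p+1)) := by
  constructor
  · intro h
    exact ⟨by simpa using h 0 (by norm_num), by simpa using h 1 (by norm_num)⟩
  · rintro ⟨h1, h2⟩ r hr
    have hr2 : r < 2 := by simpa using hr
    interval_cases r
    · simpa using h1
    · simpa using h2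

def Wc (m : ℕ) : ℕ := cnt [false, false] 0 m + cnt [true, true] 0 m

lemma Sfour (m : ℕ) :
    cnt [false,false] 0 m + cnt [false,true] 0 m + cnt [true,false] 0 m + cnt [true,true] 0 m
      = m := by
  induction m with
  | zero => simp [cnt_zero]
  | succ m ih =>
    rw [cnt_succ, cnt_succ, cnt_succ, cnt_succ]
    simp only [Nat.zero_add]
    rcases e1 : tm m <;> rcases e2 : tm (m+1) <;>
      simp only [Mt_pair, e1, e2] <;> simp <;> omega

lemma W_double (K : ℕ) : Wc (2*K) + Wc K = K := by
  have h00 : cnt [false,false] 0 (2*K) = cnt [true,false] 0 K := by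
    rw [cnt_double [false,false] (by norm_num) K]
    rw [if_neg (by decide), if_pos (by decide), Nat.zero_add,
      show oddChild [false,false] = [true,false] by decide]
  have h11 : cnt [true,true] 0 (2*K) = cnt [false,true] 0 K := by
    rw [cnt_double [true,true] (by norm_num) K]
    rw [if_neg (by decide), if_pos (by decide), Nat.zero_add,
      show oddChild [true,true] = [false,true] by decide]
  have h4 := Sfour K
  unfold Wc
  omega

lemma W_odd (K : ℕ) : Wc (2*K+1) = Wc (2*K) := by
  unfold Wc
  rw [cnt_succ, cnt_succ]
  simp only [Nat.zero_add]
  have h1 : ¬ Mt [false, false] (2*K) := by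
    rw [Mt_pair]
    rintro ⟨ha, hb⟩
    rw [tm_odd] at hb
    rw [tm_even] at ha
    rw [← ha] at hb
    simp at hb
  have h2 : ¬ Mt [true, true] (2*K) := by
    rw [Mt_pair]
    rintro ⟨ha, hb⟩
    rw [tm_odd] at hb
    rw [tm_even] at ha
    rw [← ha] at hb
    simp at hb
  rw [if_neg h1, if_neg h2]
  omega

lemma W_mono (m : ℕ) : Wc m ≤ Wc (m+1) := by
  unfold Wc
  rw [cnt_succ, cnt_succ]
  omega

lemma W_step (m : ℕ) : Wc (m+1) ≤ Wc m + 1 := by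
  unfold Wc
  rw [cnt_succ, cnt_succ]
  simp only [Nat.zero_add]
  by_cases h1 : Mt [false,false] m
  · have h2 : ¬ Mt [true,true] m := by
      rw [Mt_pair] at h1 ⊢
      rintro ⟨ha, _⟩
      rw [← h1.1] at ha
      simp at ha
    simp [h1, h2]
    omega
  · rw [if_neg h1]
    split <;> omega

/-- the sequence `1, 6, 26, 106, ...` along which `W` drifts away from linear -/
def Ks : ℕ → ℕ
  | 0 => 1
  | j+1 => 4 * Ks j + 2

lemma Ks_pos (j : ℕ) : 1 ≤ Ks j := by
  induction j with
  | zero => exact le_refl 1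
  | succ j ih =>
    have : Ks (j+1) = 4 * Ks j + 2 := rfl
    omega

lemma Wc_one : Wc 1 = 0 := by
  unfold Wc
  rw [show (1:ℕ) = 0 + 1 by omega, cnt_succ, cnt_succ]
  simp only [Nat.add_zero, Nat.zero_add]
  have h1 : ¬ Mt [false, false] 0 := by
    rw [Mt_pair]
    rintro ⟨_, hb⟩
    rw [show (0:ℕ)+1 = 1 by omega, tm_one] at hb
    simp at hb
  have h2 : ¬ Mt [true, true] 0 := by
    rw [Mt_pair]
    rintro ⟨ha, _⟩
    rw [tm_zero] at ha
    simp at ha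
  rw [if_neg h1, if_neg h2, cnt_zero, cnt_zero]

lemma W_42 (K : ℕ) : Wc (4*K+2) = K + 1 + Wc K := by
  have e1 := W_double (2*K+1)
  have e2 := W_odd K
  have e3 := W_double K
  rw [show 2*(2*K+1) = 4*K+2 by ring] at e1
  omega

lemma Ks_eq (j : ℕ) : 3 * Wc (Ks j) + 1 = Ks j + j := by
  induction j with
  | zero => simp [Ks, Wc_one]
  | succ j ih =>
    have h := W_42 (Ks j)
    have : Ks (j+1) = 4 * Ks j + 2 := rfl
    rw [this, h]
    omega

lemma not_bnd_W (c : ℤ) :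
    ¬ (∀ N : ℕ, 1 ≤ N → |((Wc (4*N) : ℤ)) - 4 * (Wc N : ℤ)| ≤ c) := by
  intro h
  set j := c.toNat + 3 with hj
  set N := Ks j with hN
  have h1 : 3 * Wc N + 1 = N + j := Ks_eq j
  have h2 : Wc (4*N+2) = N + 1 + Wc N := W_42 N
  have h3 : Wc (4*N) ≤ Wc (4*N+2) := le_trans (W_mono (4*N)) (W_mono (4*N+1))
  have h4 := h N (Ks_pos j)
  have h5 : (Wc (4*N) : ℤ) - 4 * (Wc N : ℤ) ≤ 2 - j := by
    have : (3 : ℤ) * Wc N + 1 = N + j := by exact_mod_cast h1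
    have h3' : (Wc (4*N) : ℤ) ≤ (Wc (4*N+2) : ℤ) := by exact_mod_cast h3
    have h2' : (Wc (4*N+2) : ℤ) = (N : ℤ) + 1 + Wc N := by exact_mod_cast h2
    omega
  have hc : (c : ℤ) ≤ c.toNat := Int.self_le_toNat c
  rw [abs_le] at h4
  omega

/-! ### the main induction -/

/-- complement-symmetrized occurrence count -/
def Pv (v : List Bool) (m : ℕ) : ℤ := (cnt v 0 m : ℤ) + (cnt (cmp v) 0 m : ℤ)

lemma Pv_double (v : List Bool) (hl : 1 ≤ v.length) (K : ℕ) :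
    Pv v (2*K) = (if consE v then Pv (evenChild v) K else 0)
               + (if consO v then Pv (oddChild v) K else 0) := by
  have hc1 := cnt_double v hl K
  have hc2 := cnt_double (cmp v) (by simpa using hl) K
  rw [evenChild_cmp, oddChild_cmp v hl] at hc2
  simp only [consE_cmp, consO_cmp] at hc2
  by_cases hE : consE v <;> by_cases hO : consO v <;>
    (simp only [hE, hO, if_true, if_false] at hc1 hc2 ⊢; unfold Pv; rw [hc1, hc2]; push_cast; try ring)

theorem unb : ∀ ℓ : ℕ, 2 ≤ ℓ → ∀ v : List Bool, v.length = ℓ → Occ v →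
    ∀ c : ℤ, ¬ (∀ N : ℕ, 1 ≤ N → |Pv v (4*N) - 4 * Pv v N| ≤ c) := by
  intro ℓ
  induction ℓ using Nat.strong_induction_on with
  | _ ℓ ih =>
    intro hℓ v hv hOcc c hc
    have hc0 : (0:ℤ) ≤ c := le_trans (abs_nonneg _) (hc 1 (le_refl 1))
    by_cases h2 : ℓ = 2
    · -- base case: length 2
      subst h2
      obtain ⟨a, b, rfl⟩ := List.length_eq_two.mp hv
      by_cases hab : a = b
      · subst hab
        have hW : ∀ m, Pv [a,a] m = (Wc m : ℤ) := by
          intro m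
          cases a <;> (unfold Pv Wc) <;> norm_num [cmp] <;> ring
        apply not_bnd_W c
        intro N hN
        have := hc N hN
        rwa [hW, hW] at this
      · have hW : ∀ m, Pv [a,b] m = (m : ℤ) - (Wc m : ℤ) := by
          intro m
          have h4 : (cnt [false,false] 0 m : ℤ) + cnt [false,true] 0 m + cnt [true,false] 0 m
              + cnt [true,true] 0 m = m := by exact_mod_cast Sfour m
          cases a <;> cases b
          · exact absurd rfl hab
          · unfold Pv Wc
            rw [show cmp [false,true] = [true,false] by rfl]
            push_cast
            omega
          · unfold Pv Wc
            rw [show cmp [true,false] = [false,true] by rfl]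
            push_cast
            omega
          · exact absurd rfl hab
        apply not_bnd_W c
        intro N hN
        have := hc N hN
        rw [hW, hW, show ((4*N : ℕ) : ℤ) - (Wc (4*N) : ℤ) - 4 * ((N : ℤ) - (Wc N : ℤ))
          = -((Wc (4*N) : ℤ) - 4 * (Wc N : ℤ)) by push_cast; ring] at this
        rwa [abs_neg] at this
    · -- ℓ ≥ 3
      have hl3 : 3 ≤ ℓ := by omega
      have hl1 : 1 ≤ v.length := by omega
      have hlue : (evenChild v).length = (ℓ+1)/2 := by rw [evenChild_length, hv]
      have hluo : (oddChild v).length = ℓ/2 + 1 := by rw [oddChild_length, hv]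
      by_cases hE : consE v ∧ Occ (evenChild v) <;> by_cases hO : consO v ∧ Occ (oddChild v)
      · -- both branches active
        have halt : ∀ r, r + 1 < ℓ → v.getD (r+1) false = !v.getD r false := by
          intro r hr
          rcases Nat.even_or_odd r with ⟨s, hs⟩ | ⟨s, hs⟩
          · have := hE.1 s (by omega) (by rw [hv]; omega)
            rw [show 2*s+1 = r+1 by omega, show 2*s = r by omega] at this
            exact this
          · have := hO.1 s (by omega) (by rw [hv]; omega)
            rw [show 2*s+2 = r+1 by omega, show 2*s+1 = r by omega] at this
            exact this
        by_cases h4 : 4 ≤ ℓ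
        · -- impossible: the odd child starts with three equal letters
          exfalso
          obtain ⟨q, hq⟩ := hO.2
          have e1 : v.getD 1 false = !v.getD 0 false := halt 0 (by omega)
          have e2 : v.getD 2 false = !v.getD 1 false := halt 1 (by omega)
          have e3 : v.getD 3 false = !v.getD 2 false := halt 2 (by omega)
          have g0 : (oddChild v).getD 0 false = !v.getD 0 false := oddChild_getD_zero v
          have g1 : (oddChild v).getD 1 false = !v.getD 0 false := by
            rw [show (1:ℕ) = 0 + 1 by omega, oddChild_getD_succ v (by rw [hv]; omega), e1]
          have g2 : (oddChild v).getD 2 false = !v.getD 0 false := by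
            rw [show (2:ℕ) = 1 + 1 by omega, oddChild_getD_succ v (by rw [hv]; omega), e3, e2, e1]
            simp
          have m0 := hq 0 (by rw [hluo]; omega)
          have m1 := hq 1 (by rw [hluo]; omega)
          have m2 := hq 2 (by rw [hluo]; omega)
          rw [g0] at m0
          rw [g1] at m1
          rw [g2] at m2
          simp only [Nat.add_zero] at m0
          exact tm_no_triple q (!v.getD 0 false) ⟨m0.symm, m1.symm, m2.symm⟩
        · -- ℓ = 3 : v = [a, !a, a], both children constant pairs
          have hl3' : ℓ = 3 := by omega
          have e1 : v.getD 1 false = !v.getD 0 false := halt 0 (by omega)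
          have e2 : v.getD 2 false = v.getD 0 false := by
            rw [halt 1 (by omega), e1]; simp
          have hue2 : evenChild v = [v.getD 0 false, v.getD 0 false] := by
            rw [evenChild, hv, hl3', show ((3+1)/2 : ℕ) = 2 by norm_num,
              show List.range 2 = [0, 1] by rfl]
            simp only [List.map_cons, List.map_nil]
            rw [show 2*0 = 0 by omega, show 2*1 = 2 by omega, e2]
          have huo2 : oddChild v = [!v.getD 0 false, !v.getD 0 false] := by
            rw [oddChild, hv, hl3', show ((3:ℕ)/2 : ℕ) = 1 by norm_num,
              show List.range 1 = [0] by rfl]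
            simp only [List.map_cons, List.map_nil]
            rw [show 2*0+1 = 1 by omega, e1]
          have hWp : ∀ (x : Bool) K, Pv [x, x] K = (Wc K : ℤ) := by
            intro x K
            cases x <;> (unfold Pv Wc) <;> norm_num [cmp] <;> ring
          have hP : ∀ K, Pv v (2*K) = 2 * (Wc K : ℤ) := by
            intro K
            rw [Pv_double v hl1 K, if_pos hE.1, if_pos hO.1, hue2, huo2, hWp, hWp]
            ring
          apply not_bnd_W c
          intro N hN
          have := hc (2*N) (by omega)
          rw [show 4*(2*N) = 2*(4*N) by ring, show 2*N = 2*N from rfl, hP (4*N), hP N] at this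
          rw [abs_le] at this ⊢
          omega
      · -- only the even branch is active
        have hdead : ∀ K, (if consO v then Pv (oddChild v) K else 0) = 0 := by
          intro K
          by_cases hcO : consO v
          · rw [if_pos hcO]
            have hnocc : ¬ Occ (oddChild v) := fun h => hO ⟨hcO, h⟩
            unfold Pv
            rw [cnt_eq_zero _ _ _ hnocc,
              cnt_eq_zero _ _ _ (fun h => hnocc ((Occ_cmp_iff _).mp h))]
            simp
          · rw [if_neg hcO]
        have hP : ∀ K, Pv v (2*K) = Pv (evenChild v) K := by
          intro K
          rw [Pv_double v hl1 K, if_pos hE.1, hdead K, add_zero]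
        refine ih ((ℓ+1)/2) (by omega) (by omega) (evenChild v) hlue hE.2 c ?_
        intro N hN
        have := hc (2*N) (by omega)
        rwa [show 4*(2*N) = 2*(4*N) by ring, hP (4*N), hP N] at this
      · -- only the odd branch is active
        have hdead : ∀ K, (if consE v then Pv (evenChild v) K else 0) = 0 := by
          intro K
          by_cases hcE : consE v
          · rw [if_pos hcE]
            have hnocc : ¬ Occ (evenChild v) := fun h => hE ⟨hcE, h⟩
            unfold Pv
            rw [cnt_eq_zero _ _ _ hnocc,
              cnt_eq_zero _ _ _ (fun h => hnocc ((Occ_cmp_iff _).mp h))]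
            simp
          · rw [if_neg hcE]
        have hP : ∀ K, Pv v (2*K) = Pv (oddChild v) K := by
          intro K
          rw [Pv_double v hl1 K, if_pos hO.1, hdead K, zero_add]
        refine ih (ℓ/2 + 1) (by omega) (by omega) (oddChild v) hluo hO.2 c ?_
        intro N hN
        have := hc (2*N) (by omega)
        rwa [show 4*(2*N) = 2*(4*N) by ring, hP (4*N), hP N] at this
      · -- no branch active: contradicts Occ v
        exfalso
        obtain ⟨p, hp⟩ := hOcc
        rcases Nat.even_or_odd p with ⟨i, hi⟩ | ⟨i, hi⟩
        · rw [hi, show i+i = 2*i by ring, Mt_even] at hp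
          exact hE ⟨hp.1, ⟨i, hp.2⟩⟩
        · rw [hi, Mt_odd v i hl1] at hp
          exact hO ⟨hp.1, ⟨i, hp.2⟩⟩

/-! ### substitution words -/

lemma substW_append (σ : A → List A) (u w : List A) :
    substW σ (u ++ w) = substW σ u ++ substW σ w := List.flatMap_append (xs := u) (ys := w) (f := σ)

lemma substIter_succ (σ : A → List A) (n : ℕ) (w : List A) :
    substIter σ (n+1) w = substIter σ n (substW σ w) :=
  Function.iterate_succ_apply (substW σ) n w

lemma substIter_append (σ : A → List A) (n : ℕ) (u w : List A) :
    substIter σ n (u ++ w) = substIter σ n u ++ substIter σ n w := by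
  induction n generalizing u w with
  | zero => rfl
  | succ n ihn => rw [substIter_succ, substW_append, ihn, substIter_succ, substIter_succ]

lemma substIter_infix (σ : A → List A) (n : ℕ) {u w : List A} (h : u <:+: w) :
    substIter σ n u <:+: substIter σ n w := by
  obtain ⟨s, t, hst⟩ := h
  refine ⟨substIter σ n s, substIter σ n t, ?_⟩
  rw [← substIter_append, ← substIter_append, hst]

lemma tmWord (k : ℕ) (b : Bool) :
    substIter sigmaTM k [b] = (List.range (2^k)).map (fun i => xor b (tm i)) := by
  induction k generalizing b with
  | zero =>
    rw [pow_zero, show List.range 1 = [0] by rfl]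
    simp [substIter, tm_zero]
  | succ k ihk =>
    have hσ : substW sigmaTM [b] = [b] ++ [!b] := by cases b <;> rfl
    rw [substIter_succ, hσ, substIter_append, ihk, ihk,
      show 2^(k+1) = 2^k + 2^k by ring, List.range_add, List.map_append, List.map_map]
    congr 1
    apply List.map_congr_left
    intro i hi
    rw [List.mem_range] at hi
    simp only [Function.comp]
    rw [tm_pow_add hi]
    cases b <;> cases tm i <;> rfl

/-! ### a two-sided Thue–Morse point -/

def xpt : ℤ → Bool := fun n =>
  if 0 ≤ n then tm n.toNat else !tm (4^(n.natAbs) - n.natAbs)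

lemma four_eq_two_two (k : ℕ) : (4:ℕ)^k = 2^(2*k) := by
  rw [show (4:ℕ) = 2^2 by norm_num, ← pow_mul]

lemma tm_foursub_step {j k : ℕ} (h1 : 1 ≤ j) (hk : j ≤ 4^k) :
    tm (4^(k+1) - j) = tm (4^k - j) := by
  have h4 : (4:ℕ)^(k+1) = 4 * 4^k := by ring
  have he : 4^(k+1) - j = 3 * 4^k + (4^k - j) := by omega
  have h2 : (4:ℕ)^k = 2^(2*k) := four_eq_two_two k
  rw [he, h2, tm_three_pow_add (by omega)]

lemma tm_foursub {j : ℕ} (h1 : 1 ≤ j) : ∀ {k k' : ℕ}, j ≤ 4^k → j ≤ 4^k' →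
    tm (4^k - j) = tm (4^k' - j) := by
  have key : ∀ (d k : ℕ), j ≤ 4^k → tm (4^(k+d) - j) = tm (4^k - j) := by
    intro d
    induction d with
    | zero => intro k _; rfl
    | succ d ihd =>
      intro k hk
      have hkd : j ≤ 4^(k+d) :=
        le_trans hk (Nat.pow_le_pow_right (by norm_num) (by omega))
      rw [show k + (d+1) = (k+d)+1 by ring, tm_foursub_step h1 hkd, ihd k hk]
  intro k k' hk hk'
  rcases le_total k k' with h | h
  · rw [← key (k' - k) k hk, show k + (k' - k) = k' by omega]
  · rw [← key (k - k') k' hk', show k' + (k - k') = k by omega]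

lemma xpt_neg {j k : ℕ} (h1 : 1 ≤ j) (hk : j ≤ 4^k) : xpt (-(j:ℤ)) = !tm (4^k - j) := by
  have hneg : ¬ (0:ℤ) ≤ -(j:ℤ) := by omega
  have hna : (-(j:ℤ)).natAbs = j := by omega
  rw [xpt]
  simp only [hneg, if_false, hna]
  have hjj : j ≤ 4^j := le_of_lt (Nat.lt_pow_self (n := j) (a := 4) (by norm_num))
  rw [tm_foursub h1 hjj hk]

lemma xpt_nat (j : ℕ) : xpt (j : ℤ) = tm j := by
  rw [xpt]
  simp

lemma factorAt_eq (u : ℤ → A) (i : ℤ) (n : ℕ) :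
    factorAt u i n = (List.range n).map (fun k : ℕ => u (i + (k:ℤ))) := by
  rw [factorAt]
  rw [show (do let a ← List.range n; pure ((a:ℤ))) = (List.range n).map (fun k : ℕ => (k:ℤ))
    from List.flatMap_pure_eq_map _ _]
  rw [List.map_map]
  rfl

lemma factorAt_append (u : ℤ → A) (i : ℤ) (a b : ℕ) :
    factorAt u i (a+b) = factorAt u i a ++ factorAt u (i + a) b := by
  rw [factorAt_eq, factorAt_eq, factorAt_eq, List.range_add, List.map_append, List.map_map]
  congr 1
  apply List.map_congr_left
  intro x _
  simp only [Function.comp]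
  congr 1
  push_cast
  ring

lemma factorAt_infix (u : ℤ → A) {a i : ℤ} {n m : ℕ} (h1 : a ≤ i) (h2 : i + n ≤ a + m) :
    factorAt u i n <:+: factorAt u a m := by
  set d := (i - a).toNat with hd
  have hdm : m = d + (n + (m - d - n)) := by omega
  rw [hdm, factorAt_append, factorAt_append]
  have hai : a + (d:ℤ) = i := by omega
  rw [hai]
  exact ⟨factorAt u a d, factorAt u (i + n) (m - d - n), by rw [← List.append_assoc]⟩

lemma bigwin (k : ℕ) :
    factorAt xpt (-(4^k : ℕ) : ℤ) (4^k + 4^k)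
      = substIter sigmaTM (2*k) [true] ++ substIter sigmaTM (2*k) [false] := by
  rw [factorAt_append, tmWord, tmWord, ← four_eq_two_two]
  congr 1
  · rw [factorAt_eq]
    apply List.map_congr_left
    intro r hr
    rw [List.mem_range] at hr
    have h1 : 1 ≤ 4^k - r := by omega
    have h2 : 4^k - r ≤ 4^k := by omega
    have he : (-(4^k : ℕ) : ℤ) + (r:ℤ) = -(((4^k - r : ℕ)):ℤ) := by omega
    rw [he, xpt_neg h1 h2, show 4^k - (4^k - r) = r by omega]
    cases tm r <;> rfl
  · rw [factorAt_eq]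
    have hz : (-(4^k : ℕ) : ℤ) + (4^k : ℕ) = 0 := by push_cast; ring
    rw [hz]
    apply List.map_congr_left
    intro r hr
    rw [zero_add, xpt_nat]
    cases tm r <;> rfl

lemma xpt_mem : xpt ∈ Xsub sigmaTM := by
  intro w hw
  obtain ⟨i, hwi⟩ := hw
  set n := w.length with hn
  set k := i.natAbs + n + 1 with hk
  have hkpow : k ≤ 4^k := le_of_lt (Nat.lt_pow_self (n := k) (a := 4) (by norm_num))
  have hb1 : (-(4^k : ℕ) : ℤ) ≤ i := by
    have : (i.natAbs : ℤ) ≤ (4^k : ℕ) := by exact_mod_cast le_trans (by omega) hkpow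
    omega
  have hb2 : i + n ≤ (-(4^k : ℕ) : ℤ) + (4^k + 4^k : ℕ) := by
    have h0 : i ≤ (i.natAbs : ℤ) := Int.le_natAbs
    have h1 : i.natAbs + n ≤ 4^k := le_trans (by omega) hkpow
    omega
  refine ⟨false, 2*k + 2, ?_⟩
  have hinf1 : w <:+: factorAt xpt (-(4^k : ℕ) : ℤ) (4^k + 4^k) := by
    rw [hwi]
    exact factorAt_infix xpt hb1 hb2
  rw [bigwin] at hinf1
  have hcat : substIter sigmaTM (2*k) [true] ++ substIter sigmaTM (2*k) [false]
      = substIter sigmaTM (2*k) [true, false] := by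
    rw [show [true, false] = [true] ++ [false] by rfl, substIter_append]
  rw [hcat] at hinf1
  have hTF : [true, false] <:+: substIter sigmaTM 2 [false] := by
    have : substIter sigmaTM 2 [false] = [false, true, true, false] := by
      rw [show (2:ℕ) = 1 + 1 by norm_num, substIter_succ]
      rw [show substW sigmaTM [false] = [false, true] by rfl]
      rw [show (1:ℕ) = 0 + 1 by norm_num, substIter_succ]
      rfl
    rw [this]
    exact ⟨[false, true], [], rfl⟩
  have hinf2 : substIter sigmaTM (2*k) [true, false]
      <:+: substIter sigmaTM (2*k) (substIter sigmaTM 2 [false]) :=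
    substIter_infix sigmaTM (2*k) hTF
  have heq : substIter sigmaTM (2*k) (substIter sigmaTM 2 [false])
      = substIter sigmaTM (2*k + 2) [false] :=
    (Function.iterate_add_apply (substW sigmaTM) (2*k) 2 [false]).symm
  rw [heq] at hinf2
  exact hinf1.trans hinf2

/-! ### windows of the Thue–Morse sequence -/

def wind (j n : ℕ) : List Bool := (List.range n).map (fun r => tm (j + r))

@[simp] lemma wind_length (j n : ℕ) : (wind j n).length = n := by simp [wind]

lemma wind_mem_Lang (j n : ℕ) : wind j n ∈ Lang (Xsub sigmaTM) := by
  refine ⟨xpt, xpt_mem, (j:ℤ), ?_⟩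
  rw [wind_length, factorAt_eq, wind]
  apply List.map_congr_left
  intro r _
  rw [show (j:ℤ) + (r:ℤ) = ((j + r : ℕ) : ℤ) by push_cast; ring, xpt_nat]


/-! ### occurrences in windows -/

lemma wind_getElem (j n r : ℕ) (h : r < n) :
    (wind j n)[r]'(by rw [wind_length]; exact h) = tm (j + r) := by
  simp [wind]

lemma prefix_wind_iff (v : List Bool) (hv1 : 1 ≤ v.length) (j n i : ℕ) :
    v <+: (wind j n).drop i ↔ (i + v.length ≤ n ∧ Mt v (j + i)) := by
  constructor
  · intro hpre
    obtain ⟨t, ht⟩ := hpre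
    have hlen : v.length + t.length = n - i := by
      have := congrArg List.length ht
      simpa [List.length_drop, wind_length] using this
    have hle : i + v.length ≤ n := by
      rcases Nat.le_total i n with h | h
      · omega
      · have hdz : (wind j n).drop i = [] := by
          apply List.drop_eq_nil_of_le
          rw [wind_length]; exact h
        rw [hdz] at ht
        have := congrArg List.length ht
        simp at this
        omega
    refine ⟨hle, ?_⟩
    intro r hr
    have hget : v[r]'hr = ((wind j n).drop i)[r]'(by
        rw [List.length_drop, wind_length]; omega) :=
      List.IsPrefix.getElem ⟨t, ht⟩ hr
    rw [List.getD_eq_getElem v false hr, hget, List.getElem_drop, wind_getElem j n (i+r) (by omega)]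
    congr 1
    omega
  · rintro ⟨hle, hM⟩
    rw [List.prefix_iff_eq_take]
    apply List.ext_getElem
    · rw [List.length_take, List.length_drop, wind_length]
      omega
    · intro r h1 h2
      rw [List.getElem_take, List.getElem_drop, wind_getElem j n (i+r) (by omega)]
      rw [← List.getD_eq_getElem v false h1, hM r h1]
      congr 1
      omega

lemma occ_wind (v : List Bool) (hv1 : 1 ≤ v.length) (j n : ℕ) :
    occ v (wind j n) = cnt v j (n + 1 - v.length) := by
  set m := n + 1 - v.length with hm
  rw [occ, wind_length, ← List.countP_eq_length_filter]
  have hsplit : List.range (n+1) = List.range' 0 m ++ List.range' m (n+1-m) := by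
    have hmn : m ≤ n + 1 := by omega
    have := List.range'_append (s := 0) (m := m) (n := n+1-m) (step := 1)
    simp only [one_mul, Nat.zero_add] at this
    rw [List.range_eq_range', show n + 1 = m + (n + 1 - m) by omega, ← this,
      show m + (n + 1 - m) - m = n + 1 - m by omega]
  rw [hsplit, List.countP_append]
  have hz : List.countP (fun i => decide (v <+: (wind j n).drop i)) (List.range' m (n+1-m)) = 0 := by
    rw [List.countP_eq_zero]
    intro i hi
    rw [List.mem_range'] at hi
    simp only [decide_eq_true_eq]
    rw [prefix_wind_iff v hv1]
    rintro ⟨hle, -⟩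
    omega
  rw [hz, Nat.add_zero, cnt]
  have hre : List.range' j m = (List.range' 0 m).map (fun i => j + i) := by
    rw [List.range'_eq_map_range, List.range'_eq_map_range, List.map_map]
    apply List.map_congr_left
    intro x _
    simp
  rw [hre, List.countP_map]
  apply List.countP_congr
  intro i hi
  rw [List.mem_range'] at hi
  simp only [Function.comp, decide_eq_true_eq]
  rw [prefix_wind_iff v hv1]
  constructor
  · rintro ⟨-, hM⟩; exact hM
  · intro hM
    exact ⟨by omega, hM⟩

lemma Occ_of_lang (v : List Bool) (hv : v ∈ Lang (Xsub sigmaTM)) : Occ v := by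
  obtain ⟨x, hx, hfac⟩ := hv
  obtain ⟨a, n, hinf⟩ := hx v hfac
  have ha : [a] <:+: substIter sigmaTM 2 [false] := by
    have h2 : substIter sigmaTM 2 [false] = [false, true, true, false] := by
      rw [show (2:ℕ) = 1 + 1 by norm_num, substIter_succ]
      rw [show substW sigmaTM [false] = [false, true] by rfl]
      rw [show (1:ℕ) = 0 + 1 by norm_num, substIter_succ]
      rfl
    rw [h2]
    cases a
    · exact ⟨[], [true, true, false], rfl⟩
    · exact ⟨[false], [true, false], rfl⟩
  have hinf2 : substIter sigmaTM n [a] <:+: substIter sigmaTM (n+2) [false] := by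
    have := substIter_infix sigmaTM n ha
    rwa [show substIter sigmaTM n (substIter sigmaTM 2 [false])
      = substIter sigmaTM (n+2) [false] from
      (Function.iterate_add_apply (substW sigmaTM) n 2 [false]).symm] at this
  have hvw : v <:+: (List.range (2^(n+2))).map tm := by
    have := hinf.trans hinf2
    rwa [tmWord, show (fun i => xor false (tm i)) = tm by funext i; simp] at this
  obtain ⟨s, t, hst⟩ := hvw
  rw [List.append_assoc] at hst
  refine ⟨s.length, ?_⟩
  intro r hr
  have hlen := congrArg List.length hst
  simp only [List.length_append, List.length_map, List.length_range] at hlen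
  have hb : s.length + r < 2^(n+2) := by omega
  have hb2 : s.length + r < (s ++ (v ++ t)).length := by
    simp only [List.length_append]
    omega
  have e0 : (s ++ (v ++ t))[s.length + r]'hb2 = tm (s.length + r) := by
    rw [List.getElem_of_eq hst hb2, List.getElem_map, List.getElem_range]
  have e1 : (s ++ (v ++ t))[s.length + r]'hb2 = (v ++ t)[r]'(by
      simp only [List.length_append]; omega) := by
    rw [List.getElem_append_right (by omega : s.length ≤ s.length + r)]
    congr 1
    omega
  have e2 : (v ++ t)[r]'(by simp only [List.length_append]; omega) = v[r]'hr :=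
    List.getElem_append_left hr
  rw [List.getD_eq_getElem v false hr, ← e2, ← e1, e0]



end Aux

/-- The Thue–Morse subshift is not balanced on any factor of length at least 2. -/
theorem thue_morse_unbalanced (v : List Bool) (hv : v ∈ Lang (Xsub sigmaTM))
    (hlen : 2 ≤ v.length) : ¬ SubshiftBalancedOn (Xsub sigmaTM) v := by
  rintro ⟨C, hC⟩
  have hv1 : 1 ≤ v.length := by omega
  have hOcc : Occ v := Occ_of_lang v hv
  have h1 : ∀ j m : ℕ, |(cnt v j m : ℤ) - (cnt v 0 m : ℤ)| ≤ (C:ℤ) := by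
    intro j m
    have hb := hC (wind j (m + v.length - 1)) (wind 0 (m + v.length - 1))
      (wind_mem_Lang _ _) (wind_mem_Lang _ _) (by rw [wind_length, wind_length])
    have ho1 : occ v (wind j (m + v.length - 1)) = cnt v j m := by
      rw [occ_wind v hv1, show m + v.length - 1 + 1 - v.length = m by omega]
    have ho2 : occ v (wind 0 (m + v.length - 1)) = cnt v 0 m := by
      rw [occ_wind v hv1, show m + v.length - 1 + 1 - v.length = m by omega]
    rw [ho1, ho2] at hb
    calc |(cnt v j m : ℤ) - cnt v 0 m|
        = (((cnt v j m : ℤ) - cnt v 0 m).natAbs : ℤ) := by rw [Int.abs_eq_natAbs]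
      _ ≤ (C:ℤ) := by exact_mod_cast hb
  have h2 : ∀ a b : ℕ, |(cnt v 0 (a+b) : ℤ) - cnt v 0 a - cnt v 0 b| ≤ (C:ℤ) := by
    intro a b
    have hadd := cnt_add v 0 a b
    rw [Nat.zero_add] at hadd
    rw [hadd]
    have h1' := h1 a b
    rw [abs_le] at h1' ⊢
    push_cast at h1' ⊢
    constructor <;> omega
  have h3 : ∀ N : ℕ, |(cnt v 0 (4*N) : ℤ) - 4 * cnt v 0 N| ≤ 3*(C:ℤ) := by
    intro N
    have e1 := h2 (2*N) (2*N)
    have e2 := h2 N N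
    rw [show 2*N + 2*N = 4*N by ring] at e1
    rw [show N + N = 2*N by ring] at e2
    rw [abs_le] at e1 e2 ⊢
    constructor <;> omega
  have h4 : ∀ m : ℕ, |(cnt (cmp v) 0 m : ℤ) - cnt v 0 m| ≤ (C:ℤ) := by
    intro m
    have hk : m + v.length < 2^(m + v.length) := Nat.lt_two_pow_self
    have hcc : cnt (cmp v) 0 m = cnt v (2^(m + v.length)) m := by
      rw [cnt, cnt, List.range'_eq_map_range, List.range'_eq_map_range,
        List.countP_map, List.countP_map]
      apply List.countP_congr
      intro p hp
      rw [List.mem_range] at hp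
      simp only [Function.comp, decide_eq_true_eq, Nat.zero_add]
      exact Mt_cmp v p (m + v.length) (by omega)
    rw [hcc]
    exact h1 (2^(m + v.length)) m
  refine unb v.length hlen v rfl hOcc (11*(C:ℤ)) ?_
  intro N hN
  have e3a := h3 N
  have e4a := h4 (4*N)
  have e4b := h4 N
  unfold Pv
  rw [abs_le] at e3a e4a e4b ⊢
  constructor <;> omega


end Balance
end
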